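/- Let G be a finite connected graph that is [p]-edge geodetic and H a finite connected graph that is [q]-edge geodetic, so that the Cartesian product G □ H is [p+q]-edge geodetic. Then |gen(G □ H)| ≤ |gen(G)|·|V(H)| + |gen(H)|·|V(G)|, where |gen(·)| denotes the minimum number of geodesics of the respective maximal length covering all edges of the respective graph. -/

import Mathlib

open SimpleGraph

/-- A walk is a `k`-geodesic if it has length `k` and is a shortest path
between its endpoints. -/
def IsKGeodesic {V : Type*} (G : SimpleGraph V) (k : ℕ) {u v : V} (w : G.Walk u v) : Prop :=
  w.length = k ∧ G.dist u v = k

/-- A graph is `k`-edge geodetic if every edge lies on some `k`-geodesic. -/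
def IsEdgeGeodetic {V : Type*} (G : SimpleGraph V) (k : ℕ) : Prop :=
  ∀ e ∈ G.edgeSet, ∃ (u v : V) (w : G.Walk u v), IsKGeodesic G k w ∧ e ∈ w.edges

/-- A graph is `[k]`-edge geodetic if it is `k`-edge geodetic but not `(k+1)`-edge geodetic. -/
def IsMaxEdgeGeodetic {V : Type*} (G : SimpleGraph V) (k : ℕ) : Prop :=
  IsEdgeGeodetic G k ∧ ¬ IsEdgeGeodetic G (k + 1)

/-- `genNum G k` is the minimum number of `k`-geodesics of `G` whose edges
together cover all edges of `G`. -/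
noncomputable def genNum {V : Type*} (G : SimpleGraph V) (k : ℕ) : ℕ :=
  sInf {r : ℕ | ∃ f : Fin r → Σ u : V, Σ v : V, G.Walk u v,
    (∀ i, IsKGeodesic G k (f i).2.2) ∧
    ∀ e ∈ G.edgeSet, ∃ i, e ∈ (f i).2.2.edges}

/-!
Every edge of `G □ H` lies in a layer `G × {b}` or `{a} × H`. If `w` is a `p`-geodesic of `G`
from `a₁` to `a₂` and `z` a `q`-geodesic of `H` through `b`, then following `z` in the layer
`{a₁} × H` up to `b`, then the copy of `w` in `G × {b}`, then the rest of `z` in `{a₂} × H` is a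
walk of length `p + q`; it is a geodesic because distances in `G □ H` are sums of distances in the
factors. Every vertex of `H` lies on a `q`-geodesic, as `H` is connected and has an edge (a graph
without edges is `k`-edge geodetic for every `k`). Copying each geodesic of `gen(G)` to every layer
`G × {b}`, each geodesic of `gen(H)` to every layer `{a} × H`, and extending as above gives
`|gen(G)|·|V(H)| + |gen(H)|·|V(G)|` geodesics of length `p + q` covering all edges of `G □ H`.
-/

namespace SimpleGraph

variable {α β : Type*} {G : SimpleGraph α} {H : SimpleGraph β}

lemma dist_boxProd_of_reachable {x y : α × β} (hG : G.Reachable x.1 y.1)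
    (hH : H.Reachable x.2 y.2) :
    (G □ H).dist x y = G.dist x.1 y.1 + H.dist x.2 y.2 := by
  have h := (reachable_boxProd.2 ⟨hG, hH⟩).coe_dist_eq_edist
  rw [edist_boxProd, ← hG.coe_dist_eq_edist, ← hH.coe_dist_eq_edist] at h
  exact_mod_cast h

namespace Walk

lemma length_boxProdLeft {a₁ a₂ : α} (w : G.Walk a₁ a₂) (b : β) :
    (w.boxProdLeft H b).length = w.length :=
  length_map _ _

lemma length_boxProdRight {c₁ c₂ : β} (z : H.Walk c₁ c₂) (a : α) :
    (z.boxProdRight G a).length = z.length :=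
  length_map _ _

lemma mem_edges_boxProdLeft {a₁ a₂ x y : α} {w : G.Walk a₁ a₂} (h : s(x, y) ∈ w.edges)
    (b : β) : s((x, b), (y, b)) ∈ (w.boxProdLeft H b).edges := by
  rw [show (w.boxProdLeft H b).edges = w.edges.map (Sym2.map (G.boxProdLeft H b).toHom) from
    edges_map _ _]
  exact List.mem_map_of_mem h

lemma mem_edges_boxProdRight {c₁ c₂ x y : β} {z : H.Walk c₁ c₂} (h : s(x, y) ∈ z.edges)
    (a : α) : s((a, x), (a, y)) ∈ (z.boxProdRight G a).edges := by
  rw [show (z.boxProdRight G a).edges = z.edges.map (Sym2.map (G.boxProdRight H a).toHom) from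
    edges_map _ _]
  exact List.mem_map_of_mem h

end Walk

end SimpleGraph

def IsGeodesicCover {V ι : Type*} (G : SimpleGraph V) (k : ℕ) (f : ι → Σ u v : V, G.Walk u v) :
    Prop :=
  (∀ i, IsKGeodesic G k (f i).2.2) ∧ ∀ e ∈ G.edgeSet, ∃ i, e ∈ (f i).2.2.edges

section Cover

variable {V : Type*} {G : SimpleGraph V} {k : ℕ}

lemma genNum_le_card {ι : Type*} [Fintype ι] {f : ι → Σ u v : V, G.Walk u v}
    (hf : IsGeodesicCover G k f) : genNum G k ≤ Fintype.card ι := by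
  let e := Fintype.equivFin ι
  refine Nat.sInf_le ⟨f ∘ e.symm, fun i => hf.1 _, fun x hx => ?_⟩
  obtain ⟨i, hi⟩ := hf.2 x hx
  exact ⟨e i, by rwa [Function.comp_apply, e.symm_apply_apply]⟩

lemma IsEdgeGeodetic.exists_isGeodesicCover [Finite V] (h : IsEdgeGeodetic G k) :
    ∃ f : Fin (genNum G k) → Σ u v : V, G.Walk u v, IsGeodesicCover G k f := by
  choose u v w hw hmem using h
  let e := Finite.equivFin G.edgeSet
  refine Nat.sInf_mem (s := {r | ∃ f : Fin r → _, IsGeodesicCover G k f})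
    ⟨Nat.card G.edgeSet, fun i => ⟨_, _, w _ (e.symm i).2⟩, fun i => hw _ _,
      fun x hx => ⟨e ⟨x, hx⟩, ?_⟩⟩
  dsimp only
  rw [Equiv.symm_apply_apply]
  exact hmem x hx

lemma isEdgeGeodetic_bot (k : ℕ) : IsEdgeGeodetic (⊥ : SimpleGraph V) k :=
  fun _ he => absurd he (by simp)

lemma IsMaxEdgeGeodetic.ne_bot (h : IsMaxEdgeGeodetic G k) : G ≠ ⊥ := by
  rintro rfl
  exact h.2 (isEdgeGeodetic_bot _)

lemma IsMaxEdgeGeodetic.exists_isKGeodesic_mem_support (h : IsMaxEdgeGeodetic G k)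
    (hc : G.Connected) (a : V) :
    ∃ (u v : V) (w : G.Walk u v), IsKGeodesic G k w ∧ a ∈ w.support := by
  obtain ⟨c, d, hcd⟩ := ne_bot_iff_exists_adj.1 h.ne_bot
  have := hcd.nontrivial
  obtain ⟨a', ha'⟩ := hc.preconnected.exists_adj_of_nontrivial a
  obtain ⟨u, v, w, hw, he⟩ := h.1 s(a, a') ha'
  exact ⟨u, v, w, hw, w.fst_mem_support_of_mem_edges he⟩

end Cover

section BoxProd

open SimpleGraph.Walk

variable {α β : Type*} {G : SimpleGraph α} {H : SimpleGraph β} {p q : ℕ}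

lemma isKGeodesic_boxProd_of_length_eq {a₁ a₂ : α} {c₁ c₂ : β} {w : G.Walk a₁ a₂}
    (hw : IsKGeodesic G p w) {z : H.Walk c₁ c₂} (hz : IsKGeodesic H q z)
    {W : (G □ H).Walk (a₁, c₁) (a₂, c₂)} (hW : W.length = p + q) :
    IsKGeodesic (G □ H) (p + q) W :=
  ⟨hW, by rw [dist_boxProd_of_reachable ⟨w⟩ ⟨z⟩, hw.2, hz.2]⟩

lemma IsKGeodesic.exists_boxProdLeft_subset {a₁ a₂ : α} {w : G.Walk a₁ a₂}
    (hw : IsKGeodesic G p w) {c₁ c₂ : β} {z : H.Walk c₁ c₂} (hz : IsKGeodesic H q z) {b : β}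
    (hb : b ∈ z.support) :
    ∃ W : (G □ H).Walk (a₁, c₁) (a₂, c₂), IsKGeodesic (G □ H) (p + q) W ∧
      (w.boxProdLeft H b).edges ⊆ W.edges := by
  classical
  have hzq : (z.takeUntil b hb).length + (z.dropUntil b hb).length = q := by
    rw [← length_append, take_spec, hz.1]
  refine ⟨((z.takeUntil b hb).boxProdRight G a₁).append
    ((w.boxProdLeft H b).append ((z.dropUntil b hb).boxProdRight G a₂)),
    isKGeodesic_boxProd_of_length_eq hw hz ?_, ?_⟩
  · rw [length_append, length_append, length_boxProdLeft, length_boxProdRight,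
      length_boxProdRight, hw.1]
    omega
  · rw [edges_append, edges_append]
    exact List.subset_append_of_subset_right _ (List.subset_append_left _ _)

lemma IsKGeodesic.exists_boxProdRight_subset {a₁ a₂ : α} {t : G.Walk a₁ a₂}
    (ht : IsKGeodesic G p t) {c₁ c₂ : β} {z : H.Walk c₁ c₂} (hz : IsKGeodesic H q z) {a : α}
    (ha : a ∈ t.support) :
    ∃ W : (G □ H).Walk (a₁, c₁) (a₂, c₂), IsKGeodesic (G □ H) (p + q) W ∧
      (z.boxProdRight G a).edges ⊆ W.edges := by
  classical
  have htp : (t.takeUntil a ha).length + (t.dropUntil a ha).length = p := by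
    rw [← length_append, take_spec, ht.1]
  refine ⟨((t.takeUntil a ha).boxProdLeft H c₁).append
    ((z.boxProdRight G a).append ((t.dropUntil a ha).boxProdLeft H c₂)),
    isKGeodesic_boxProd_of_length_eq ht hz ?_, ?_⟩
  · rw [length_append, length_append, length_boxProdLeft, length_boxProdLeft,
      length_boxProdRight, hz.1]
    omega
  · rw [edges_append, edges_append]
    exact List.subset_append_of_subset_right _ (List.subset_append_left _ _)

lemma IsGeodesicCover.boxProd {ι κ : Type*} {f : ι → Σ u v : α, G.Walk u v}
    (hf : IsGeodesicCover G p f) {g : κ → Σ u v : β, H.Walk u v} (hg : IsGeodesicCover H q g)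
    (hGv : ∀ a, ∃ (u v : α) (t : G.Walk u v), IsKGeodesic G p t ∧ a ∈ t.support)
    (hHv : ∀ b, ∃ (u v : β) (z : H.Walk u v), IsKGeodesic H q z ∧ b ∈ z.support) :
    ∃ F : (ι × β) ⊕ (κ × α) → Σ x y : α × β, (G □ H).Walk x y,
      IsGeodesicCover (G □ H) (p + q) F := by
  choose zu zv z hz hbz using hHv
  choose tu tv t ht hat using hGv
  choose WL hWL hWLe using fun ib : ι × β =>
    (hf.1 ib.1).exists_boxProdLeft_subset (hz ib.2) (hbz ib.2)
  choose WR hWR hWRe using fun ja : κ × α =>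
    (ht ja.2).exists_boxProdRight_subset (hg.1 ja.1) (hat ja.2)
  refine ⟨Sum.elim (fun ib => ⟨_, _, WL ib⟩) (fun ja => ⟨_, _, WR ja⟩), ?_, ?_⟩
  · rintro (ib | ja)
    exacts [hWL ib, hWR ja]
  · intro e he
    induction e using Sym2.ind with
    | h x y =>
      obtain ⟨a₁, b₁⟩ := x
      obtain ⟨a₂, b₂⟩ := y
      simp only [SimpleGraph.mem_edgeSet, boxProd_adj] at he
      rcases he with ⟨hA, rfl⟩ | ⟨hA, rfl⟩
      · obtain ⟨i, hi⟩ := hf.2 s(a₁, a₂) hA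
        exact ⟨.inl (i, b₁), hWLe _ (mem_edges_boxProdLeft hi b₁)⟩
      · obtain ⟨j, hj⟩ := hg.2 s(b₁, b₂) hA
        exact ⟨.inr (j, a₁), hWRe _ (mem_edges_boxProdRight hj a₁)⟩

end BoxProd

/-- If `G` is a finite connected `[p]`-edge geodetic graph and `H` is a finite connected
`[q]`-edge geodetic graph (so that `G □ H` is `[p + q]`-edge geodetic), then
`|gen(G □ H)| ≤ |gen(G)|·|V(H)| + |gen(H)|·|V(G)|`. -/
theorem boxProd_genNum_le {α β : Type*} [Fintype α] [Fintype β]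
    (G : SimpleGraph α) (H : SimpleGraph β) (hGc : G.Connected) (hHc : H.Connected)
    (p q : ℕ) (hG : IsMaxEdgeGeodetic G p) (hH : IsMaxEdgeGeodetic H q) :
    genNum (G □ H) (p + q) ≤ genNum G p * Fintype.card β + genNum H q * Fintype.card α := by
  obtain ⟨fG, hfG⟩ := hG.1.exists_isGeodesicCover
  obtain ⟨fH, hfH⟩ := hH.1.exists_isGeodesicCover
  obtain ⟨F, hF⟩ := hfG.boxProd hfH (hG.exists_isKGeodesic_mem_support hGc)
    (hH.exists_isKGeodesic_mem_support hHc)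
  simpa using genNum_le_card hF
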